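/- The up-down Markov chain on 𝒯_n satisfies DU_n = (1/C(n+1,2)) · A P G A^{-1}, where A is the diagonal operator on ℂ𝒯_n sending t to m(t)·t; equivalently, for all t, t' ∈ 𝒯_n, DU_n(t,t') = (m(t') / (C(n+1,2) m(t))) · Σ_{s: s ⋗ t and s ⋗ t'} n(t,s) m(t',s). -/

import Mathlib

/-!
Common definitions: rooted unlabeled trees on `n` vertices, the growth/pruning
coefficients `n(t,t')` and `m(t,t')`, the measure `π_n`, the up/down transition
probabilities, the down-up and up-down Markov chains, and separation distance.

A rooted tree is represented as `PreTree.node cs` where `cs` is the list of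
subtrees of the root's children.  An *unlabeled* rooted tree is represented by
its canonical representative (children recursively sorted by an injective
encoding into `ℕ`), and `trees n` is the finite set of canonical rooted trees
on `n` vertices.
-/

namespace RootedTreeChain

inductive PreTree : Type where
  | node : List PreTree → PreTree

namespace PreTree

/- Number of vertices. -/
mutual
  def size : PreTree → ℕ
    | .node cs => 1 + sizeList cs
  def sizeList : List PreTree → ℕ
    | [] => 0
    | t :: ts => size t + sizeList ts
end

mutual
def deq : (a b : PreTree) → Decidable (a = b)
  | .node cs, .node ds =>
    match deqList cs ds with
    | isTrue h => isTrue (by rw [h])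
    | isFalse h => isFalse (by intro hh; cases hh; exact h rfl)
def deqList : (as bs : List PreTree) → Decidable (as = bs)
  | [], [] => isTrue rfl
  | [], _ :: _ => isFalse (by simp)
  | _ :: _, [] => isFalse (by simp)
  | a :: as, b :: bs =>
    match deq a b, deqList as bs with
    | isTrue h1, isTrue h2 => isTrue (by rw [h1, h2])
    | isFalse h1, _ => isFalse (by intro hh; injection hh; contradiction)
    | _, isFalse h2 => isFalse (by intro hh; injection hh; contradiction)
end

instance : DecidableEq PreTree := deq

/- An injective encoding of trees into `ℕ`, used only to sort children
so that each unlabeled rooted tree has a unique canonical representative. -/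
mutual
  def enc : PreTree → ℕ
    | .node cs => encList cs
  def encList : List PreTree → ℕ
    | [] => 0
    | t :: ts => Nat.pair (enc t) (encList ts) + 1
end

/- Canonical representative of the isomorphism class of a rooted tree:
recursively sort the children by their encoding. -/
mutual
  def canon : PreTree → PreTree
    | .node cs => .node ((canonList cs).mergeSort (fun a b => enc a ≤ enc b))
  def canonList : List PreTree → List PreTree
    | [] => []
    | t :: ts => canon t :: canonList ts
end

/-- The one-vertex rooted tree `•`. -/
def leaf : PreTree := .node []

/- The addresses (paths of child indices from the root) of all vertices. -/
mutual
  def positions : PreTree → List (List ℕ)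
    | .node cs => [] :: positionsList 0 cs
  def positionsList : ℕ → List PreTree → List (List ℕ)
    | _, [] => []
    | i, t :: ts => (positions t).map (fun p => i :: p) ++ positionsList (i + 1) ts
end

/- The addresses of all terminal vertices (vertices with no outgoing edge). -/
mutual
  def termPositions : PreTree → List (List ℕ)
    | .node [] => [[]]
    | .node (c :: cs) => termPositionsList 0 (c :: cs)
  def termPositionsList : ℕ → List PreTree → List (List ℕ)
    | _, [] => []
    | i, t :: ts => (termPositions t).map (fun p => i :: p) ++ termPositionsList (i + 1) ts
end

/- Attach a new terminal vertex by an edge to the vertex at address `p`. -/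
mutual
  def addLeafAt : PreTree → List ℕ → PreTree
    | .node cs, [] => .node (cs ++ [leaf])
    | .node cs, i :: p => .node (addLeafAtList cs i p)
  def addLeafAtList : List PreTree → ℕ → List ℕ → List PreTree
    | [], _, _ => []
    | t :: ts, 0, p => addLeafAt t p :: ts
    | t :: ts, i + 1, p => t :: addLeafAtList ts i p
end

/- Remove the (terminal) vertex at address `p` together with the edge into it. -/
mutual
  def removeAt : PreTree → List ℕ → PreTree
    | .node cs, [] => .node cs
    | .node cs, [i] => .node (cs.eraseIdx i)
    | .node cs, i :: p => .node (removeAtList cs i p)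
  def removeAtList : List PreTree → ℕ → List ℕ → List PreTree
    | [], _, _ => []
    | t :: ts, 0, p => removeAt t p :: ts
    | t :: ts, i + 1, p => t :: removeAtList ts i p
end

/-- For `s ↗ t` (and more generally any `s, t` with `size t = size s + 1`),
`ncoef s t` is `n(s,t)`: the number of vertices of `s` to which a new edge can
be added to obtain `t`. -/
def ncoef (s t : PreTree) : ℕ :=
  ((positions s).filter (fun p => canon (addLeafAt s p) = t)).length

/-- For `s ↗ t`, `mcoef s t` is `m(s,t)`: the number of edges of `t` (into a
terminal vertex) which when removed give `s`. -/
def mcoef (s t : PreTree) : ℕ :=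
  ((termPositions t).filter (fun p => canon (removeAt t p) = s)).length

/-- The list of all (canonical representatives of) rooted unlabeled trees on
`n` vertices: every tree on `n+1 ≥ 2` vertices is obtained by attaching a new
terminal vertex to a tree on `n` vertices. -/
def treeList : ℕ → List PreTree
  | 0 => []
  | 1 => [leaf]
  | n + 2 =>
      ((treeList (n + 1)).flatMap
        (fun t => (positions t).map (fun p => canon (addLeafAt t p)))).dedup

/-- The set `𝒯_n` of rooted unlabeled trees on `n` vertices. -/
def trees (n : ℕ) : Finset PreTree := (treeList n).toFinset

/-- `T_n = |𝒯_n|`, the number of rooted unlabeled trees on `n` vertices. -/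
def T (n : ℕ) : ℕ := (trees n).card

/-- Generalized growth coefficients: `nGen k t t'` is the coefficient `n(t,t')`
of `t'` in `G^k(t)` (for `size t' = size t + k`). -/
def nGen : ℕ → PreTree → PreTree → ℕ
  | 0, t, t' => if t = t' then 1 else 0
  | k + 1, t, t' => ((treeList (t.size + k)).map (fun s => nGen k t s * ncoef s t')).sum

/-- Generalized pruning coefficients: `mGen k t t'` is the coefficient `m(t,t')`
of `t` in `P^k(t')` (for `size t' = size t + k`). -/
def mGen : ℕ → PreTree → PreTree → ℕ
  | 0, t, t' => if t = t' then 1 else 0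
  | k + 1, t, t' => ((treeList (t'.size - 1)).map (fun s => mcoef s t' * mGen k t s)).sum

/-- `m(t) = m(•,t)`, the number of ways to take `t` apart by sequentially
removing terminal edges. -/
def mWt (t : PreTree) : ℕ := mGen (t.size - 1) leaf t

/-- `n(t) = n(•,t)`, the number of ways to build `t` up from `•`. -/
def nWt (t : PreTree) : ℕ := nGen (t.size - 1) leaf t

/-- The measure `π_n(t) = m(t) n(t) / ∏_{i=2}^n C(i,2)` on `𝒯_n`. -/
def piM (n : ℕ) (t : PreTree) : ℚ :=
  (mWt t * nWt t : ℚ) / ∏ i ∈ Finset.Icc 2 n, (Nat.choose i 2 : ℚ)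

/-- Upward transition probability `P_u(s,t) = m(s,t) n(t) / (C(n,2) n(s))`
from `s ∈ 𝒯_{n-1}` to `t ∈ 𝒯_n`. -/
def Pu (n : ℕ) (s t : PreTree) : ℚ :=
  (mcoef s t : ℚ) * (nWt t : ℚ) / ((Nat.choose n 2 : ℚ) * (nWt s : ℚ))

/-- Downward transition probability `P_d(t,s) = m(s,t) m(s) / m(t)`
from `t ∈ 𝒯_n` to `s ∈ 𝒯_{n-1}`. -/
def Pd (t s : PreTree) : ℚ :=
  (mcoef s t : ℚ) * (mWt s : ℚ) / (mWt t : ℚ)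

/-- The down-up Markov chain on `𝒯_n`:
`K(t,t') = Σ_{s : s ↗ t, s ↗ t'} P_d(t,s) P_u(s,t')`.  (The sum may be taken
over all `s ∈ 𝒯_{n-1}` since the summand vanishes unless `s ↗ t` and `s ↗ t'`.) -/
def K (n : ℕ) (t t' : PreTree) : ℚ :=
  ∑ s ∈ trees (n - 1), Pd t s * Pu n s t'

/-- `r`-step transition probabilities `K^r(t,t')` of the down-up chain. -/
def Kpow (n : ℕ) : ℕ → PreTree → PreTree → ℚ
  | 0, t, t' => if t = t' then 1 else 0
  | r + 1, t, t' => ∑ s ∈ trees n, K n t s * Kpow n r s t'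

/-- The up-down Markov chain on `𝒯_n`:
`DU_n(t,t') = Σ_{s : s ⋗ t, s ⋗ t'} P_u(t,s) P_d(s,t')`. -/
def DU (n : ℕ) (t t' : PreTree) : ℚ :=
  ∑ s ∈ trees (n + 1), Pu (n + 1) t s * Pd s t'

/-- `r`-step transition probabilities of the up-down chain. -/
def DUpow (n : ℕ) : ℕ → PreTree → PreTree → ℚ
  | 0, t, t' => if t = t' then 1 else 0
  | r + 1, t, t' => ∑ s ∈ trees n, DU n t s * DUpow n r s t'

/-- Maximal separation distance `s^*(r) = max_{t,t' ∈ 𝒯_n} [1 - K^r(t,t')/π_n(t')]`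
of the down-up chain on `𝒯_n`. -/
noncomputable def sStar (n r : ℕ) : ℝ :=
  sSup {x : ℝ | ∃ t ∈ trees n, ∃ t' ∈ trees n,
    x = 1 - (Kpow n r t t' : ℝ) / (piM n t' : ℝ)}

/-- Maximal separation distance of the up-down chain on `𝒯_n`. -/
noncomputable def sStarDU (n r : ℕ) : ℝ :=
  sSup {x : ℝ | ∃ t ∈ trees n, ∃ t' ∈ trees n,
    x = 1 - (DUpow n r t t' : ℝ) / (piM n t' : ℝ)}

/-- The path on `n` vertices (rooted at an end): the unique rooted tree on
`n ≥ 2` vertices with exactly one terminal vertex. -/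
def pathTree : ℕ → PreTree
  | 0 => leaf
  | 1 => leaf
  | n + 2 => .node [pathTree (n + 1)]

/-- The star on `n` vertices (rooted at the center): the unique rooted tree on
`n` vertices with `n-1` terminal vertices. -/
def starTree (n : ℕ) : PreTree := .node (List.replicate (n - 1) leaf)


/- The order of the symmetry group `SG(t) = ∏_{v ∈ t} SG(t,v)`, where for a
vertex `v` with children `v_1, …, v_k`, `SG(t,v)` is generated by the
permutations exchanging isomorphic subtrees rooted at the `v_i`. -/
mutual
  def sgOrder : PreTree → ℕ
    | .node cs => sgOrderList cs *
        ((canonList cs).dedup.map (fun c => Nat.factorial ((canonList cs).count c))).prod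
  def sgOrderList : List PreTree → ℕ
    | [] => 1
    | t :: ts => sgOrder t * sgOrderList ts
end

/- `hProd t = ∏_{v ∈ t} h(v)`, the product over all vertices `v` of `t` of the
number `h(v)` of vertices of the subtree rooted at `v`. -/
mutual
  def hProd : PreTree → ℕ
    | .node cs => size (.node cs) * hProdList cs
  def hProdList : List PreTree → ℕ
    | [] => 1
    | t :: ts => hProd t * hProdList ts
end

/-- The matrix entry of `G P : ℂ𝒯_n → ℂ𝒯_n`: the coefficient of `t'` in `G(P(t))`. -/
def gpEntry (n : ℕ) (t t' : PreTree) : ℕ :=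
  ∑ s ∈ trees (n - 1), mcoef s t * ncoef s t'

/-- The matrix entry of `(G P)^l : ℂ𝒯_n → ℂ𝒯_n`: the coefficient of `t'` in `(GP)^l(t)`. -/
def gpPow (n : ℕ) : ℕ → PreTree → PreTree → ℕ
  | 0, t, t' => if t = t' then 1 else 0
  | l + 1, t, t' => ∑ u ∈ trees n, gpPow n l t u * gpEntry n u t'

end PreTree

/-!
The heart of the proof is the identity `m(t,s) · |SG(t)| = n(t,s) · |SG(s)|` for `s ⋗ t`, proved
by induction on `t` by comparing the multisets of root subtrees of `t` and `s`: either `s` is `t`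
with a new terminal vertex at the root, or exactly one subtree `c` of `t` has grown into a subtree
`x` of `s` (and the identity for `c ↗ x` is the induction hypothesis), or both coefficients vanish.
Summed over the trees one vertex smaller, it gives `m(t) = n(t) · |SG(t)|`, and together these yield
`m(t,s) n(s) / n(t) = n(t,s) m(s) / m(t)`, i.e. the second expression of `P_u(t,s)`. Substituting
it into `DU_n` gives the claim.
-/

theorem _root_.Multiset.cons_erase_eq_comm {α : Type*} [DecidableEq α] {M D : Multiset α}
    {c x : α} (hc : c ∈ M) (hx : x ∈ D) : x ::ₘ M.erase c = D ↔ c ::ₘ D.erase x = M := by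
  constructor <;> rintro rfl
  · rw [Multiset.erase_cons_head, Multiset.cons_erase hc]
  · rw [Multiset.erase_cons_head, Multiset.cons_erase hx]

theorem _root_.Multiset.eq_of_cons_erase_eq_cons_erase {α : Type*} [DecidableEq α]
    {M : Multiset α} {c c' x x' : α} (hc : c ∈ M) (hxc : x ≠ c)
    (h : x' ::ₘ M.erase c' = x ::ₘ M.erase c) : c' = c := by
  by_contra hne
  have hcount := congrArg (Multiset.count c) h
  rw [Multiset.count_cons, Multiset.count_cons, Multiset.count_erase_of_ne (Ne.symm hne),
    Multiset.count_erase_self, if_neg (Ne.symm hxc)] at hcount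
  have := Multiset.count_pos.mpr hc
  omega

theorem _root_.Multiset.cons_erase_ne_of_card_ne {α : Type*} [DecidableEq α] {M D : Multiset α}
    {c x : α} (hc : c ∈ M) (hcard : Multiset.card D ≠ Multiset.card M) : x ::ₘ M.erase c ≠ D := by
  rintro rfl
  rw [Multiset.card_cons, Multiset.card_erase_add_one hc] at hcard
  exact hcard rfl

theorem _root_.Multiset.prod_factorial_count_cons {α : Type*} [DecidableEq α] (x : α)
    (M : Multiset α) :
    ∏ c ∈ (x ::ₘ M).toFinset, ((x ::ₘ M).count c).factorial
      = (M.count x + 1) * ∏ c ∈ M.toFinset, (M.count c).factorial := by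
  have hsub : M.toFinset ⊆ (x ::ₘ M).toFinset := by simp [Finset.subset_insert]
  rw [Finset.prod_subset hsub (f := fun c => (M.count c).factorial) fun c _ hc => by
    rw [Multiset.count_eq_zero.mpr (by simpa using hc), Nat.factorial_zero]]
  have hfac : ∀ c, ((x ::ₘ M).count c).factorial
      = (if c = x then M.count x + 1 else 1) * (M.count c).factorial := by
    intro c
    by_cases hcx : c = x
    · subst hcx; rw [Multiset.count_cons_self, if_pos rfl, Nat.factorial_succ]
    · rw [Multiset.count_cons_of_ne hcx, if_neg hcx, one_mul]
  rw [Finset.prod_congr rfl fun c _ => hfac c, Finset.prod_mul_distrib, Finset.prod_ite_eq']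
  simp

namespace PreTree

@[elab_as_elim]
theorem node_induction {motive : PreTree → Prop}
    (h : ∀ cs, (∀ c ∈ cs, motive c) → motive (node cs)) : ∀ t, motive t
  | node cs => h cs fun c _ => node_induction h c

theorem sizeList_eq_sum (l : List PreTree) : sizeList l = (l.map size).sum := by
  induction l with
  | nil => rfl
  | cons t ts ih => simp [sizeList, ih]

theorem size_node (cs : List PreTree) : size (node cs) = 1 + (cs.map size).sum := by
  rw [size, sizeList_eq_sum]

theorem size_pos (t : PreTree) : 0 < size t := by
  obtain ⟨cs⟩ := t
  rw [size_node]
  omega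

theorem size_leaf : size leaf = 1 := rfl

mutual
theorem enc_inj : ∀ a b : PreTree, enc a = enc b → a = b
  | node cs, node ds, h => congrArg node (encList_inj cs ds h)
theorem encList_inj : ∀ as bs : List PreTree, encList as = encList bs → as = bs
  | [], [], _ => rfl
  | [], _ :: _, h | _ :: _, [], h => by simp [encList] at h
  | a :: as, b :: bs, h => by
    obtain ⟨ha, has⟩ := Nat.pair_eq_pair.mp (Nat.succ_injective h)
    rw [enc_inj a b ha, encList_inj as bs has]
end

theorem canonList_eq_map (l : List PreTree) : canonList l = l.map canon := by
  induction l with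
  | nil => rfl
  | cons c cs ih => rw [canonList, ih, List.map_cons]

theorem canon_node (cs : List PreTree) :
    canon (node cs) = node ((cs.map canon).mergeSort fun a b => enc a ≤ enc b) := by
  rw [canon, canonList_eq_map]

theorem pairwise_mergeSort_enc (l : List PreTree) :
    (l.mergeSort fun a b => enc a ≤ enc b).Pairwise fun a b => enc a ≤ enc b := by
  simpa using List.pairwise_mergeSort (le := fun a b => decide (enc a ≤ enc b))
    (fun a b c hab hbc => by simp only [decide_eq_true_eq] at *; omega)
    (fun a b => by simp only [Bool.or_eq_true, decide_eq_true_eq]; omega) l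

theorem eq_of_perm_of_pairwise_enc {l l' : List PreTree} (h : l.Perm l')
    (hl : l.Pairwise fun a b => enc a ≤ enc b) (hl' : l'.Pairwise fun a b => enc a ≤ enc b) :
    l = l' :=
  h.eq_of_pairwise (fun a b _ _ hab hba => enc_inj a b (le_antisymm hab hba)) hl hl'

def Canonical (t : PreTree) : Prop := canon t = t

theorem canonical_canon (t : PreTree) : Canonical (canon t) := by
  induction t using node_induction with
  | h cs ih =>
    rw [Canonical, canon_node, canon_node]
    set l := (cs.map canon).mergeSort fun a b => enc a ≤ enc b
    have hmap : l.map canon = l := by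
      refine (List.map_congr_left fun c hc => ?_).trans (List.map_id l)
      obtain ⟨d, hd, rfl⟩ := List.mem_map.mp ((List.mergeSort_perm _ _).mem_iff.mp hc)
      exact ih d hd
    rw [hmap, List.mergeSort_of_pairwise (by simpa using pairwise_mergeSort_enc _)]

theorem canon_leaf : canon leaf = leaf := by
  rw [leaf, canon_node, List.map_nil, List.mergeSort_nil]

theorem Canonical.pairwise_enc {cs : List PreTree} (h : Canonical (node cs)) :
    cs.Pairwise fun a b => enc a ≤ enc b := by
  rw [Canonical, canon_node, node.injEq] at h
  exact h ▸ pairwise_mergeSort_enc _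

theorem Canonical.children {cs : List PreTree} (h : Canonical (node cs)) :
    ∀ c ∈ cs, Canonical c := by
  intro c hc
  rw [Canonical, canon_node, node.injEq] at h
  rw [← h] at hc
  obtain ⟨d, -, rfl⟩ := List.mem_map.mp ((List.mergeSort_perm _ _).mem_iff.mp hc)
  exact canonical_canon d

theorem map_canon_of_canonical {cs : List PreTree} (h : ∀ c ∈ cs, Canonical c) :
    cs.map canon = cs :=
  (List.map_congr_left h).trans (List.map_id cs)

theorem canon_node_eq_iff {ds : List PreTree} (hds : Canonical (node ds)) (X : List PreTree) :
    canon (node X) = node ds ↔ (X.map canon : Multiset PreTree) = ds := by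
  rw [canon_node, node.injEq, Multiset.coe_eq_coe]
  constructor
  · intro h
    exact h ▸ (List.mergeSort_perm _ _).symm
  · intro h
    exact eq_of_perm_of_pairwise_enc ((List.mergeSort_perm _ _).trans h)
      (pairwise_mergeSort_enc _) hds.pairwise_enc

theorem canon_node_middle_eq_iff {ds pre post : List PreTree} (hds : Canonical (node ds))
    (h : ∀ c ∈ pre ++ post, Canonical c) (y : PreTree) :
    canon (node (pre ++ y :: post)) = node ds ↔
      canon y ::ₘ (pre ++ post : Multiset PreTree) = ds := by
  rw [canon_node_eq_iff hds, List.map_append, List.map_cons,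
    map_canon_of_canonical fun c hc => h c (List.mem_append_left _ hc),
    map_canon_of_canonical fun c hc => h c (List.mem_append_right _ hc),
    Multiset.coe_eq_coe.mpr List.perm_middle, Multiset.cons_coe]

theorem size_canon (t : PreTree) : size (canon t) = size t := by
  induction t using node_induction with
  | h cs ih =>
    rw [canon_node, size_node, size_node, ((List.mergeSort_perm _ _).map size).sum_eq,
      List.map_map, List.map_congr_left (f := size ∘ canon) (g := size) ih]

theorem addLeafAtList_append (pre : List PreTree) (c : PreTree) (post : List PreTree)
    (p : List ℕ) :
    addLeafAtList (pre ++ c :: post) pre.length p = pre ++ addLeafAt c p :: post := by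
  induction pre with
  | nil => rfl
  | cons a pre ih => simp [addLeafAtList, ih]

theorem removeAtList_append (pre : List PreTree) (c : PreTree) (post : List PreTree)
    (p : List ℕ) :
    removeAtList (pre ++ c :: post) pre.length p = pre ++ removeAt c p :: post := by
  induction pre with
  | nil => rfl
  | cons a pre ih => simp [removeAtList, ih]

theorem removeAt_cons_of_ne_nil (cs : List PreTree) (i : ℕ) {p : List ℕ} (hp : p ≠ []) :
    removeAt (node cs) (i :: p) = node (removeAtList cs i p) := by
  obtain ⟨a, q, rfl⟩ := List.exists_cons_of_ne_nil hp
  rfl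

theorem mem_positionsList {L : List PreTree} {j : ℕ} {q : List ℕ} (hq : q ∈ positionsList j L) :
    ∃ pre c post p, L = pre ++ c :: post ∧ p ∈ positions c ∧ q = (j + pre.length) :: p := by
  induction L generalizing j with
  | nil => simp [positionsList] at hq
  | cons c cs ih =>
    rw [positionsList, List.mem_append, List.mem_map] at hq
    rcases hq with ⟨p, hp, rfl⟩ | hq
    · exact ⟨[], c, cs, p, rfl, hp, rfl⟩
    · obtain ⟨pre, c', post, p, rfl, hp, rfl⟩ := ih hq
      exact ⟨c :: pre, c', post, p, rfl, hp, by simp only [List.length_cons]; congr 1; omega⟩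

theorem termPositions_leaf : termPositions leaf = [[]] := rfl

theorem ne_nil_of_mem_termPositionsList {L : List PreTree} {j : ℕ} {q : List ℕ}
    (hq : q ∈ termPositionsList j L) : q ≠ [] := by
  induction L generalizing j with
  | nil => simp [termPositionsList] at hq
  | cons d ds ih =>
    rw [termPositionsList, List.mem_append, List.mem_map] at hq
    rcases hq with ⟨p, -, rfl⟩ | hq
    · exact List.cons_ne_nil _ _
    · exact ih hq

theorem ne_nil_of_mem_termPositions {c : PreTree} (hc : c ≠ leaf) {q : List ℕ}
    (hq : q ∈ termPositions c) : q ≠ [] := by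
  obtain ⟨_ | ⟨x, xs⟩⟩ := c
  · exact absurd rfl hc
  · exact ne_nil_of_mem_termPositionsList hq

theorem size_addLeafAt (t : PreTree) {p : List ℕ} (hp : p ∈ positions t) :
    size (addLeafAt t p) = size t + 1 := by
  induction t using node_induction generalizing p with
  | h cs ih =>
    rcases List.mem_cons.mp hp with rfl | hp
    · simp [addLeafAt, size_node, size_leaf]
      omega
    · obtain ⟨pre, c, post, q, rfl, hq, rfl⟩ := mem_positionsList hp
      rw [zero_add, addLeafAt, addLeafAtList_append]
      simp [size_node, ih c (by simp) hq]
      omega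

def growCount (M D : Multiset PreTree) (c : PreTree) : ℕ :=
  ((positions c).filter fun p => canon (addLeafAt c p) ::ₘ M.erase c = D).length

/-- Removing a terminal child of the root deletes that child instead of shrinking it, hence the
separate case `d = leaf`. -/
def pruneCount (D M : Multiset PreTree) (d : PreTree) : ℕ :=
  if d = leaf then if D.erase leaf = M then 1 else 0
  else ((termPositions d).filter fun p => canon (removeAt d p) ::ₘ D.erase d = M).length

theorem erase_coe_middle (pre : List PreTree) (c : PreTree) (post : List PreTree) :
    (pre ++ c :: post : Multiset PreTree).erase c = (pre ++ post : Multiset PreTree) := by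
  rw [Multiset.coe_eq_coe.mpr List.perm_middle, ← Multiset.cons_coe, Multiset.erase_cons_head]

theorem length_filter_positionsList {ds : List PreTree} (hds : Canonical (node ds))
    (pre L : List PreTree) (h : ∀ c ∈ pre ++ L, Canonical c) :
    ((positionsList pre.length L).filter
        fun q => canon (addLeafAt (node (pre ++ L)) q) = node ds).length
      = (L.map (growCount (pre ++ L : Multiset PreTree) ds)).sum := by
  induction L generalizing pre with
  | nil => simp [positionsList]
  | cons c post ih =>
    rw [positionsList, List.filter_append, List.length_append, List.filter_map,
      List.length_map, List.map_cons, List.sum_cons]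
    have hrest : ∀ c' ∈ pre ++ post, Canonical c' := fun c' hc' =>
      h c' (by simp at hc' ⊢; tauto)
    congr 1
    · rw [growCount, erase_coe_middle]
      congr 1
      refine List.filter_congr fun p _ => ?_
      simp only [Function.comp_apply, addLeafAt, addLeafAtList_append,
        canon_node_middle_eq_iff hds hrest]
    · simpa using ih (pre ++ [c]) (by simpa using h)

theorem length_filter_termPositionsList {es : List PreTree} (hes : Canonical (node es))
    (pre L : List PreTree) (h : ∀ c ∈ pre ++ L, Canonical c) :
    ((termPositionsList pre.length L).filter
        fun q => canon (removeAt (node (pre ++ L)) q) = node es).length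
      = (L.map (pruneCount (pre ++ L : Multiset PreTree) es)).sum := by
  induction L generalizing pre with
  | nil => simp [termPositionsList]
  | cons c post ih =>
    rw [termPositionsList, List.filter_append, List.length_append, List.filter_map,
      List.length_map, List.map_cons, List.sum_cons]
    have hrest : ∀ c' ∈ pre ++ post, Canonical c' := fun c' hc' =>
      h c' (by simp at hc' ⊢; tauto)
    congr 1
    · by_cases hc : c = leaf
      · subst hc
        have hrm : removeAt (node (pre ++ leaf :: post)) [pre.length] = node (pre ++ post) := by
          rw [removeAt, List.eraseIdx_append_of_length_le le_rfl, Nat.sub_self,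
            List.eraseIdx_cons_zero]
        have hcond : canon (removeAt (node (pre ++ leaf :: post)) [pre.length]) = node es ↔
            (pre ++ post : Multiset PreTree) = es := by
          rw [hrm, canon_node_eq_iff hes, map_canon_of_canonical hrest]
        rw [pruneCount, if_pos rfl, erase_coe_middle]
        by_cases hpost : (pre ++ post : Multiset PreTree) = es
        · simp [termPositions_leaf, hcond.mpr hpost, hpost]
        · simp [termPositions_leaf, mt hcond.mp hpost, hpost]
      · rw [pruneCount, if_neg hc, erase_coe_middle]
        congr 1
        refine List.filter_congr fun p hp => ?_
        simp only [Function.comp_apply,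
          removeAt_cons_of_ne_nil _ _ (ne_nil_of_mem_termPositions hc hp), removeAtList_append,
          canon_node_middle_eq_iff hes hrest]
    · simpa using ih (pre ++ [c]) (by simpa using h)

theorem ncoef_node {cs ds : List PreTree} (hcs : Canonical (node cs))
    (hds : Canonical (node ds)) :
    ncoef (node cs) (node ds) = (if leaf ::ₘ (cs : Multiset PreTree) = ds then 1 else 0)
      + ((cs : Multiset PreTree).map (growCount cs ds)).sum := by
  have hroot :
      canon (addLeafAt (node cs) []) = node ds ↔ leaf ::ₘ (cs : Multiset PreTree) = ds := by
    simpa [addLeafAt, canon_leaf] using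
      canon_node_middle_eq_iff hds (pre := cs) (post := []) (by simpa using hcs.children) leaf
  have hchildren := length_filter_positionsList hds [] cs (by simpa using hcs.children)
  simp only [List.nil_append, List.length_nil] at hchildren
  rw [ncoef, positions, List.filter_cons, Multiset.map_coe, Multiset.sum_coe, ← hchildren]
  split_ifs <;> simp_all [Nat.add_comm]

theorem mcoef_node {es ds : List PreTree} (hes : Canonical (node es))
    (hds : Canonical (node ds)) (hne : ds ≠ []) :
    mcoef (node es) (node ds) = ((ds : Multiset PreTree).map (pruneCount ds es)).sum := by
  obtain ⟨d, ds', rfl⟩ := List.exists_cons_of_ne_nil hne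
  rw [mcoef, termPositions, Multiset.map_coe, Multiset.sum_coe]
  exact length_filter_termPositionsList hes [] _ (by simpa using hds.children)

theorem growCount_eq_ncoef {M D : Multiset PreTree} {c x : PreTree} (h : x ::ₘ M.erase c = D) :
    growCount M D c = ncoef c x := by
  subst h
  simp only [growCount, ncoef, Multiset.cons_inj_left]

theorem growCount_eq_zero {M D : Multiset PreTree} {c : PreTree} (h : ∀ x, x ::ₘ M.erase c ≠ D) :
    growCount M D c = 0 := by
  simp [growCount, h]

theorem pruneCount_leaf (D M : Multiset PreTree) :
    pruneCount D M leaf = if D.erase leaf = M then 1 else 0 :=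
  if_pos rfl

theorem pruneCount_eq_mcoef {D M : Multiset PreTree} {d y : PreTree} (hd : d ≠ leaf)
    (h : y ::ₘ D.erase d = M) : pruneCount D M d = mcoef y d := by
  subst h
  simp only [pruneCount, if_neg hd, mcoef, Multiset.cons_inj_left]

theorem pruneCount_eq_zero {D M : Multiset PreTree} {d : PreTree} (hd : d ≠ leaf)
    (h : ∀ y, y ::ₘ D.erase d ≠ M) : pruneCount D M d = 0 := by
  simp [pruneCount, hd, h]

theorem ncoef_node_of_eq_leaf_cons {cs ds : List PreTree} (hcs : Canonical (node cs))
    (hds : Canonical (node ds)) (h : (ds : Multiset PreTree) = leaf ::ₘ cs) :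
    ncoef (node cs) (node ds) = 1 := by
  have hgrow : ((cs : Multiset PreTree).map (growCount cs ds)).sum = 0 :=
    Multiset.sum_eq_zero fun _ hn => by
      obtain ⟨c, hc, rfl⟩ := Multiset.mem_map.mp hn
      exact growCount_eq_zero fun x => Multiset.cons_erase_ne_of_card_ne hc (by simp [h])
  rw [ncoef_node hcs hds, if_pos h.symm, hgrow]

theorem mcoef_node_of_eq_leaf_cons {cs ds : List PreTree} (hcs : Canonical (node cs))
    (hds : Canonical (node ds)) (h : (ds : Multiset PreTree) = leaf ::ₘ cs) :
    mcoef (node cs) (node ds) = (cs : Multiset PreTree).count leaf + 1 := by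
  have hne : ds ≠ [] := by rintro rfl; exact Multiset.cons_ne_zero h.symm
  rw [mcoef_node hcs hds hne, Multiset.sum_map_eq_nsmul_single leaf, pruneCount_leaf,
    if_pos (by rw [h, Multiset.erase_cons_head]), h, Multiset.count_cons_self, smul_eq_mul,
    mul_one]
  intro d hd hdD
  exact pruneCount_eq_zero hd fun y => Multiset.cons_erase_ne_of_card_ne hdD (by simp [h])

theorem ncoef_node_of_cons_erase_eq {cs ds : List PreTree} (hcs : Canonical (node cs))
    (hds : Canonical (node ds)) {c x : PreTree} (hc : c ∈ (cs : Multiset PreTree))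
    (hxc : x ≠ c) (h : x ::ₘ (cs : Multiset PreTree).erase c = ds) :
    ncoef (node cs) (node ds) = (cs : Multiset PreTree).count c * ncoef c x := by
  have hroot : leaf ::ₘ (cs : Multiset PreTree) ≠ ds := fun hA =>
    Multiset.cons_erase_ne_of_card_ne hc (by simp) (h.trans hA.symm)
  rw [ncoef_node hcs hds, if_neg hroot, zero_add, Multiset.sum_map_eq_nsmul_single c,
    growCount_eq_ncoef h, smul_eq_mul]
  intro c' hc' _
  exact growCount_eq_zero fun x' hx' =>
    hc' (Multiset.eq_of_cons_erase_eq_cons_erase hc hxc (hx'.trans h.symm))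

theorem mcoef_node_of_cons_erase_eq {cs ds : List PreTree} (hcs : Canonical (node cs))
    (hds : Canonical (node ds)) {c x : PreTree} (hc : c ∈ (cs : Multiset PreTree))
    (hxc : x ≠ c) (hx : x ≠ leaf) (hA : (ds : Multiset PreTree) ≠ leaf ::ₘ cs)
    (h : x ::ₘ (cs : Multiset PreTree).erase c = ds) :
    mcoef (node cs) (node ds) = ((cs : Multiset PreTree).count x + 1) * mcoef c x := by
  have hxD : x ∈ (ds : Multiset PreTree) := h ▸ Multiset.mem_cons_self x _
  have hne : ds ≠ [] := by rintro rfl; exact Multiset.notMem_zero x hxD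
  rw [mcoef_node hcs hds hne, Multiset.sum_map_eq_nsmul_single x,
    pruneCount_eq_mcoef hx ((Multiset.cons_erase_eq_comm hc hxD).mp h), ← h,
    Multiset.count_cons_self, Multiset.count_erase_of_ne hxc, smul_eq_mul]
  intro d hdx hdD
  by_cases hd : d = leaf
  · subst hd
    rw [pruneCount_leaf, if_neg]
    exact fun hD => hA (by rw [← hD, Multiset.cons_erase hdD])
  · refine pruneCount_eq_zero hd fun y hy => hdx ?_
    have hyM : y ∈ (cs : Multiset PreTree) := hy ▸ Multiset.mem_cons_self y _
    have hD := ((Multiset.cons_erase_eq_comm hyM hdD).mpr hy).trans h.symm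
    obtain rfl := Multiset.eq_of_cons_erase_eq_cons_erase hc hxc hD
    exact (Multiset.cons_inj_left _).mp hD

theorem ncoef_node_eq_zero {cs ds : List PreTree} (hcs : Canonical (node cs))
    (hds : Canonical (node ds)) (hA : (ds : Multiset PreTree) ≠ leaf ::ₘ cs)
    (hB : ∀ c ∈ (cs : Multiset PreTree), ∀ x, x ::ₘ (cs : Multiset PreTree).erase c ≠ ds) :
    ncoef (node cs) (node ds) = 0 := by
  have hgrow : ((cs : Multiset PreTree).map (growCount cs ds)).sum = 0 :=
    Multiset.sum_eq_zero fun _ hn => by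
      obtain ⟨c, hc, rfl⟩ := Multiset.mem_map.mp hn
      exact growCount_eq_zero (hB c hc)
  rw [ncoef_node hcs hds, if_neg (Ne.symm hA), hgrow]

theorem mcoef_node_eq_zero {cs ds : List PreTree} (hcs : Canonical (node cs))
    (hds : Canonical (node ds)) (hne : ds ≠ []) (hA : (ds : Multiset PreTree) ≠ leaf ::ₘ cs)
    (hB : ∀ c ∈ (cs : Multiset PreTree), ∀ x, x ::ₘ (cs : Multiset PreTree).erase c ≠ ds) :
    mcoef (node cs) (node ds) = 0 := by
  rw [mcoef_node hcs hds hne]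
  refine Multiset.sum_eq_zero fun _ hn => ?_
  obtain ⟨d, hdD, rfl⟩ := Multiset.mem_map.mp hn
  by_cases hd : d = leaf
  · subst hd
    rw [pruneCount_leaf, if_neg]
    exact fun hD => hA (by rw [← hD, Multiset.cons_erase hdD])
  · refine pruneCount_eq_zero hd fun y hy => ?_
    have hyM : y ∈ (cs : Multiset PreTree) := hy ▸ Multiset.mem_cons_self y _
    exact hB y hyM d ((Multiset.cons_erase_eq_comm hyM hdD).mpr hy)

/-- `|SG|` of the forest `M`: the symmetries of each tree, and the permutations of isomorphic
trees. -/
def forestSgOrder (M : Multiset PreTree) : ℕ :=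
  (M.map sgOrder).prod * ∏ c ∈ M.toFinset, (M.count c).factorial

theorem forestSgOrder_cons (x : PreTree) (M : Multiset PreTree) :
    forestSgOrder (x ::ₘ M) = (M.count x + 1) * sgOrder x * forestSgOrder M := by
  rw [forestSgOrder, forestSgOrder, Multiset.map_cons, Multiset.prod_cons,
    Multiset.prod_factorial_count_cons]
  ring

theorem forestSgOrder_of_mem {M : Multiset PreTree} {c : PreTree} (hc : c ∈ M) :
    forestSgOrder M = M.count c * sgOrder c * forestSgOrder (M.erase c) := by
  conv_lhs => rw [← Multiset.cons_erase hc]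
  rw [forestSgOrder_cons, Multiset.count_erase_self,
    Nat.sub_add_cancel (Multiset.count_pos.mpr hc)]

theorem sgOrderList_eq_prod (l : List PreTree) : sgOrderList l = (l.map sgOrder).prod := by
  induction l with
  | nil => rfl
  | cons t ts ih => rw [sgOrderList, ih, List.map_cons, List.prod_cons]

theorem sgOrder_node_of_canonical {cs : List PreTree} (h : Canonical (node cs)) :
    sgOrder (node cs) = forestSgOrder cs := by
  rw [sgOrder, canonList_eq_map, map_canon_of_canonical h.children, forestSgOrder,
    sgOrderList_eq_prod, Finset.prod_eq_multiset_prod, Multiset.toFinset_val, Multiset.coe_dedup,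
    Multiset.map_coe, Multiset.map_coe, Multiset.prod_coe, Multiset.prod_coe]
  simp only [Multiset.coe_count]

theorem sgOrder_leaf : sgOrder leaf = 1 := rfl

theorem sgOrder_pos (t : PreTree) : 0 < sgOrder t := by
  induction t using node_induction with
  | h cs ih =>
    rw [sgOrder, sgOrderList_eq_prod]
    refine Nat.mul_pos (List.prod_pos ?_) (List.prod_pos ?_) <;>
      simp only [List.mem_map] <;> rintro _ ⟨c, hc, rfl⟩
    · exact ih c hc
    · exact Nat.factorial_pos _

theorem mcoef_mul_sgOrder (t : PreTree) {s : PreTree} (ht : Canonical t) (hs : Canonical s)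
    (hsize : size s = size t + 1) : mcoef t s * sgOrder t = ncoef t s * sgOrder s := by
  induction t using node_induction generalizing s with
  | h cs ih =>
    obtain ⟨ds⟩ := s
    have hsum : ((ds : Multiset PreTree).map size).sum
        = ((cs : Multiset PreTree).map size).sum + 1 := by
      simp only [Multiset.map_coe, Multiset.sum_coe]
      rw [size_node, size_node] at hsize
      omega
    rw [sgOrder_node_of_canonical ht, sgOrder_node_of_canonical hs]
    by_cases hA : (ds : Multiset PreTree) = leaf ::ₘ cs
    · rw [mcoef_node_of_eq_leaf_cons ht hs hA, ncoef_node_of_eq_leaf_cons ht hs hA, hA,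
        forestSgOrder_cons, sgOrder_leaf]
      ring
    by_cases hB :
        ∃ c ∈ (cs : Multiset PreTree), ∃ x, x ::ₘ (cs : Multiset PreTree).erase c = ds
    · obtain ⟨c, hc, x, h⟩ := hB
      have hsizex : size x = size c + 1 := by
        rw [← h, Multiset.map_cons, Multiset.sum_cons, ← Multiset.cons_erase hc,
          Multiset.map_cons, Multiset.sum_cons, Multiset.erase_cons_head] at hsum
        omega
      have hx : x ≠ leaf := by
        rintro rfl
        have := size_pos c
        rw [size_leaf] at hsizex
        omega
      have hxc : x ≠ c := by rintro rfl; omega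
      have hxD : x ∈ (ds : Multiset PreTree) := h ▸ Multiset.mem_cons_self x _
      have hsub := ih c hc (ht.children c hc) (hs.children x hxD) hsizex
      rw [mcoef_node_of_cons_erase_eq ht hs hc hxc hx hA h,
        ncoef_node_of_cons_erase_eq ht hs hc hxc h, forestSgOrder_of_mem hc, ← h,
        forestSgOrder_cons, Multiset.count_erase_of_ne hxc]
      linear_combination ((cs : Multiset PreTree).count x + 1) * (cs : Multiset PreTree).count c *
        forestSgOrder ((cs : Multiset PreTree).erase c) * hsub
    · push Not at hB
      have hne : ds ≠ [] := by
        rintro rfl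
        simp at hsum
      rw [mcoef_node_eq_zero ht hs hne hA hB, ncoef_node_eq_zero ht hs hA hB, zero_mul, zero_mul]

theorem mem_treeList_succ_succ {n : ℕ} {t : PreTree} :
    t ∈ treeList (n + 2) ↔
      ∃ u ∈ treeList (n + 1), ∃ p ∈ positions u, canon (addLeafAt u p) = t := by
  simp [treeList]

theorem canonical_of_mem_treeList {n : ℕ} {t : PreTree} (ht : t ∈ treeList n) : Canonical t := by
  match n, ht with
  | 1, ht => rw [List.mem_singleton.mp ht]; exact canon_leaf
  | _ + 2, ht =>
    obtain ⟨u, -, p, -, rfl⟩ := mem_treeList_succ_succ.mp ht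
    exact canonical_canon _

theorem size_of_mem_treeList {n : ℕ} {t : PreTree} (ht : t ∈ treeList n) : size t = n := by
  match n, ht with
  | 1, ht => rw [List.mem_singleton.mp ht]; rfl
  | n + 2, ht =>
    obtain ⟨u, hu, p, hp, rfl⟩ := mem_treeList_succ_succ.mp ht
    rw [size_canon, size_addLeafAt u hp, size_of_mem_treeList hu]

theorem nWt_eq_sum {n : ℕ} {s : PreTree} (hs : size s = n + 2) :
    nWt s = ((treeList (n + 1)).map fun u => nWt u * ncoef u s).sum := by
  rw [nWt, hs, show n + 2 - 1 = n + 1 from rfl, nGen, size_leaf, Nat.add_comm 1 n]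
  refine congrArg List.sum (List.map_congr_left fun u hu => ?_)
  rw [nWt, size_of_mem_treeList hu, Nat.add_sub_cancel]

theorem mWt_eq_sum {n : ℕ} {s : PreTree} (hs : size s = n + 2) :
    mWt s = ((treeList (n + 1)).map fun u => mcoef u s * mWt u).sum := by
  rw [mWt, hs, show n + 2 - 1 = n + 1 from rfl, mGen, hs, show n + 2 - 1 = n + 1 from rfl]
  refine congrArg List.sum (List.map_congr_left fun u hu => ?_)
  rw [mWt, size_of_mem_treeList hu, Nat.add_sub_cancel]

theorem nWt_pos_of_mem_treeList {n : ℕ} {t : PreTree} (ht : t ∈ treeList n) : 0 < nWt t := by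
  match n, ht with
  | 1, ht => rw [List.mem_singleton.mp ht]; decide
  | n + 2, ht =>
    obtain ⟨u, hu, p, hp, rfl⟩ := mem_treeList_succ_succ.mp ht
    have hncoef : 0 < ncoef u (canon (addLeafAt u p)) :=
      List.length_pos_iff.mpr (List.ne_nil_of_mem (List.mem_filter.mpr ⟨hp, by simp⟩))
    rw [nWt_eq_sum (by rw [size_canon, size_addLeafAt u hp, size_of_mem_treeList hu])]
    exact lt_of_lt_of_le (Nat.mul_pos (nWt_pos_of_mem_treeList hu) hncoef)
      (List.le_sum_of_mem (List.mem_map_of_mem hu))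

theorem mWt_eq_nWt_mul_sgOrder {n : ℕ} {t : PreTree} (ht : t ∈ treeList n) :
    mWt t = nWt t * sgOrder t := by
  match n, ht with
  | 1, ht => rw [List.mem_singleton.mp ht]; rfl
  | n + 2, ht =>
    have hsize := size_of_mem_treeList ht
    rw [mWt_eq_sum hsize, nWt_eq_sum hsize, ← List.sum_map_mul_right]
    refine congrArg List.sum (List.map_congr_left fun u hu => ?_)
    rw [mWt_eq_nWt_mul_sgOrder hu, mul_assoc, mul_left_comm, mcoef_mul_sgOrder u
      (canonical_of_mem_treeList hu) (canonical_of_mem_treeList ht)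
      (by rw [hsize, size_of_mem_treeList hu])]

theorem mWt_pos_of_mem_treeList {n : ℕ} {t : PreTree} (ht : t ∈ treeList n) : 0 < mWt t := by
  rw [mWt_eq_nWt_mul_sgOrder ht]
  exact Nat.mul_pos (nWt_pos_of_mem_treeList ht) (sgOrder_pos t)

theorem Pu_eq_ncoef_mul_mWt_div {n : ℕ} {t s : PreTree} (ht : t ∈ treeList n)
    (hs : s ∈ treeList (n + 1)) :
    Pu (n + 1) t s = ncoef t s * mWt s / ((n + 1).choose 2 * mWt t) := by
  have hsize : size s = size t + 1 := by
    rw [size_of_mem_treeList ht, size_of_mem_treeList hs]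
  have hweights : (mcoef t s * nWt s * mWt t : ℚ) = ncoef t s * nWt t * mWt s := by
    norm_cast
    rw [mWt_eq_nWt_mul_sgOrder ht, mWt_eq_nWt_mul_sgOrder hs]
    linear_combination nWt s * nWt t *
      mcoef_mul_sgOrder t (canonical_of_mem_treeList ht) (canonical_of_mem_treeList hs) hsize
  have hC : ((n + 1).choose 2 : ℚ) ≠ 0 := by
    have := size_of_mem_treeList ht ▸ size_pos t
    exact_mod_cast (Nat.choose_pos (by omega)).ne'
  have hn : (nWt t : ℚ) ≠ 0 := by exact_mod_cast (nWt_pos_of_mem_treeList ht).ne'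
  have hm : (mWt t : ℚ) ≠ 0 := by exact_mod_cast (mWt_pos_of_mem_treeList ht).ne'
  rw [Pu, div_eq_div_iff (mul_ne_zero hC hn) (mul_ne_zero hC hm)]
  linear_combination ((n + 1).choose 2 : ℚ) * hweights

theorem mem_trees {n : ℕ} {t : PreTree} : t ∈ trees n ↔ t ∈ treeList n := List.mem_toFinset

end PreTree

open PreTree in
/-- `DU_n = (1/C(n+1,2)) · A P G A⁻¹` where `A` is the diagonal
operator `t ↦ m(t)·t`; entrywise, for all `t, t' ∈ 𝒯_n`,
`DU_n(t,t') = (m(t')/(C(n+1,2) m(t))) · Σ_{s : s ⋗ t, s ⋗ t'} n(t,s) m(t',s)`. -/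
theorem DU_eq_APGAinv (n : ℕ) (hn : 1 ≤ n) (t t' : PreTree)
    (ht : t ∈ trees n) (ht' : t' ∈ trees n) :
    DU n t t' = (mWt t' : ℚ) / ((Nat.choose (n + 1) 2 : ℚ) * (mWt t : ℚ))
      * ∑ s ∈ trees (n + 1), ((ncoef t s * mcoef t' s : ℕ) : ℚ) := by
  rw [DU, Finset.mul_sum]
  refine Finset.sum_congr rfl fun s hs => ?_
  have hms : (mWt s : ℚ) ≠ 0 := by
    exact_mod_cast (mWt_pos_of_mem_treeList (mem_trees.mp hs)).ne'
  rw [Pu_eq_ncoef_mul_mWt_div (mem_trees.mp ht) (mem_trees.mp hs), Pd, Nat.cast_mul]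
  field_simp

end RootedTreeChain
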